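/- arXiv:2102.12534 — 7 statements merged into one kernel-verified Lean document; each statement's English description precedes it below -/
import Mathlib

section
/- Let n_A ≥ 1, d = 2^{n_A}, and let ρ be a density matrix on ℂ^d with eigenvalues λ_1, …, λ_d. Then the trace distance between ρ and the maximally mixed state (1/d)·I, which equals (1/2)·∑_{i=1}^d |λ_i − 1/d|, is bounded above by √((n_A − S(ρ))/2), where S(ρ) = −∑_{i=1}^d λ_i log₂ λ_i is the von Neumann entropy of ρ in bits. -/
open Real Finset
open scoped ComplexOrder

open InformationTheory

/-! Pinsker's inequality against the uniform distribution. It follows from the pointwise bound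
`3 (t - 1)² ≤ 2 (t + 2) klFun t` (the difference has derivative `4 ((t + 1) log t - 2 (t - 1))`,
which changes sign only at `t = 1`) combined with the Cauchy–Schwarz inequality in Sedrakyan's form,
weighted by `p + 2 q`, whose total mass is `3`. For `q` uniform on `2 ^ n` points the relative
entropy is `(n - S(p)) log 2` with `S` in bits, and `log 2 < 1`. -/

lemma monotoneOn_add_one_mul_log_sub_two_mul_sub_one :
    MonotoneOn (fun t : ℝ ↦ (t + 1) * log t - 2 * (t - 1)) (Set.Ioi 0) := by
  refine monotoneOn_of_hasDerivWithinAt_nonneg (f' := fun t ↦ log t + (t + 1) * t⁻¹ - 2)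
    (convex_Ioi 0) ?_ (fun t ht ↦ ?_) (fun t ht ↦ ?_)
  · exact ((continuousOn_id.add continuousOn_const).mul
      (continuousOn_log.mono fun t ht ↦ (Set.mem_Ioi.mp ht).ne')).sub (by fun_prop)
  · rw [interior_Ioi] at ht
    have hderiv : HasDerivAt (fun t : ℝ ↦ (t + 1) * log t - 2 * (t - 1))
        (1 * log t + (t + 1) * t⁻¹ - 2 * 1) t :=
      (((hasDerivAt_id t).add_const 1).mul (hasDerivAt_log (ne_of_gt ht))).sub
        (((hasDerivAt_id t).sub_const 1).const_mul 2)
    exact (hderiv.congr_deriv (by ring)).hasDerivWithinAt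
  · rw [interior_Ioi] at ht
    have ht : 0 < t := ht
    have hlog := one_sub_inv_le_log_of_pos ht
    rw [add_mul, mul_inv_cancel₀ ht.ne']
    linarith

lemma three_mul_sq_sub_one_le_klFun {t : ℝ} (ht : 0 ≤ t) :
    3 * (t - 1) ^ 2 ≤ 2 * (t + 2) * klFun t := by
  have hderiv : ∀ t ≠ 0, HasDerivAt (fun s ↦ 2 * (s + 2) * klFun s - 3 * (s - 1) ^ 2)
      (4 * ((t + 1) * log t - 2 * (t - 1))) t := fun t ht ↦ by
    have h : HasDerivAt (fun s ↦ 2 * (s + 2) * klFun s - 3 * (s - 1) ^ 2)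
        (2 * 1 * klFun t + 2 * (t + 2) * log t - 3 * (2 * (t - 1) ^ 1 * 1)) t :=
      ((((hasDerivAt_id t).add_const 2).const_mul 2).mul (hasDerivAt_klFun ht)).sub
        ((((hasDerivAt_id t).sub_const 1).pow 2).const_mul 3)
    exact h.congr_deriv (by rw [klFun_apply]; ring)
  have hcont : ∀ t, ContinuousAt (fun s ↦ 2 * (s + 2) * klFun s - 3 * (s - 1) ^ 2) t :=
    fun t ↦ by have := continuous_klFun; fun_prop
  have hdiff : DifferentiableOn ℝ (fun s ↦ 2 * (s + 2) * klFun s - 3 * (s - 1) ^ 2) (Set.Ioi 0) :=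
    fun s hs ↦ (hderiv s (ne_of_gt hs)).differentiableAt.differentiableWithinAt
  have hk := monotoneOn_add_one_mul_log_sub_two_mul_sub_one
  have hmin := isMinOn_Ici_of_deriv (a := 0) (b := 1) (hcont 0) (hcont 1)
    (hdiff.mono Set.Ioo_subset_Ioi_self) (hdiff.mono (Set.Ioi_subset_Ioi zero_le_one))
    (fun s hs ↦ ?_) (fun s hs ↦ ?_) ht
  · simpa [klFun_one] using hmin
  · rw [(hderiv s hs.1.ne').deriv]
    have hks := hk hs.1 (Set.mem_Ioi.mpr one_pos) hs.2.le
    simp only [log_one] at hks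
    linarith
  · have hs : 1 < s := hs
    rw [(hderiv s (by positivity)).deriv]
    have hks := hk (Set.mem_Ioi.mpr one_pos) (Set.mem_Ioi.mpr (by linarith)) hs.le
    simp only [log_one] at hks
    linarith

lemma sq_sub_div_add_two_mul_le {x u : ℝ} (hx : 0 ≤ x) (hu : 0 < u) :
    (x - u) ^ 2 / (x + 2 * u) ≤ 2 / 3 * (x * (log x - log u) + u - x) := by
  have hkl := three_mul_sq_sub_one_le_klFun (div_nonneg hx hu.le)
  have hmul : x * (log x - log u) = u * (x / u * log (x / u)) := by
    rcases hx.eq_or_lt with rfl | hx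
    · simp
    · rw [log_div hx.ne' hu.ne']; field_simp
  rw [div_le_iff₀ (by positivity), hmul]
  have := mul_le_mul_of_nonneg_left hkl (sq_nonneg u)
  rw [klFun_apply] at this
  field_simp at this ⊢
  nlinarith [this]

theorem sq_sum_abs_sub_le_two_mul_sum_mul_log_sub {ι : Type*} [Fintype ι] {p q : ι → ℝ}
    (hp : ∀ i, 0 ≤ p i) (hq : ∀ i, 0 < q i) (hp1 : ∑ i, p i = 1) (hq1 : ∑ i, q i = 1) :
    (∑ i, |p i - q i|) ^ 2 ≤ 2 * ∑ i, p i * (log (p i) - log (q i)) := by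
  have hpos : ∀ i ∈ univ, 0 < p i + 2 * q i := fun i _ ↦ by linarith [hp i, hq i]
  have hmass : ∑ i, (p i + 2 * q i) = 3 := by
    rw [sum_add_distrib, ← mul_sum, hp1, hq1]; norm_num
  calc (∑ i, |p i - q i|) ^ 2 = 3 * ((∑ i, |p i - q i|) ^ 2 / ∑ i, (p i + 2 * q i)) := by
        rw [hmass]; ring
    _ ≤ 3 * ∑ i, |p i - q i| ^ 2 / (p i + 2 * q i) := by
        gcongr; exact sq_sum_div_le_sum_sq_div _ _ hpos
    _ ≤ 3 * ∑ i, 2 / 3 * (p i * (log (p i) - log (q i)) + q i - p i) := by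
        gcongr with i; rw [sq_abs]; exact sq_sub_div_add_two_mul_le (hp i) (hq i)
    _ = 2 * ∑ i, p i * (log (p i) - log (q i)) := by
        simp only [← mul_sum, sum_sub_distrib, sum_add_distrib, hp1, hq1]; ring

theorem sq_sum_abs_sub_inv_two_pow_le {n : ℕ} {p : Fin (2 ^ n) → ℝ} (hp : ∀ i, 0 ≤ p i)
    (hp1 : ∑ i, p i = 1) :
    (∑ i, |p i - 1 / (2 ^ n : ℝ)|) ^ 2 ≤ 2 * log 2 * (n + ∑ i, p i * logb 2 (p i)) := by
  have hq1 : ∑ _i : Fin (2 ^ n), 1 / (2 ^ n : ℝ) = 1 := by simp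
  have hlog : ∀ x, log x = log 2 * logb 2 x := fun x ↦ by
    rw [← log_div_log, mul_div_cancel₀ _ (log_pos one_lt_two).ne']
  calc _ ≤ 2 * ∑ i, p i * (log (p i) - log (1 / 2 ^ n)) :=
        sq_sum_abs_sub_le_two_mul_sum_mul_log_sub hp (fun _ ↦ by positivity) hp1 hq1
    _ = 2 * ∑ i, (log 2 * (p i * logb 2 (p i)) + log 2 * n * p i) := by
        simp only [one_div, log_inv, log_pow, hlog (p _)]
        exact congrArg (2 * ·) (sum_congr rfl fun i _ ↦ by ring)
    _ = 2 * log 2 * (n + ∑ i, p i * logb 2 (p i)) := by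
        rw [sum_add_distrib, ← mul_sum, ← mul_sum, hp1]; ring

theorem trace_distance_le_sqrt_entropy_deficit_general
    (nA : ℕ)
    (ρ : Matrix (Fin (2 ^ nA)) (Fin (2 ^ nA)) ℂ)
    (hρ : ρ.PosSemidef) (htr : ρ.trace = 1) :
    (1 / 2) * ∑ i, |hρ.isHermitian.eigenvalues i - 1 / (2 ^ nA : ℝ)| ≤
      Real.sqrt (((nA : ℝ) -
        (- ∑ i, hρ.isHermitian.eigenvalues i * Real.logb 2 (hρ.isHermitian.eigenvalues i))) / 2) := by
  have hsum : ∑ i, hρ.isHermitian.eigenvalues i = 1 := by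
    have := hρ.isHermitian.trace_eq_sum_eigenvalues
    rw [htr] at this
    exact Complex.ofReal_eq_one.mp (by push_cast; exact this.symm)
  set μ := hρ.isHermitian.eigenvalues
  have hpinsker := sq_sum_abs_sub_inv_two_pow_le hρ.eigenvalues_nonneg hsum
  have hlog2 : 0 < log 2 := log_pos one_lt_two
  have hlog2_lt_one : log 2 < 1 := by linarith [log_two_lt_d9]
  have hdeficit : 0 ≤ (nA : ℝ) + ∑ i, μ i * logb 2 (μ i) :=
    nonneg_of_mul_nonneg_right (by linarith [sq_nonneg (∑ i, |μ i - 1 / (2 ^ nA : ℝ)|)]) hlog2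
  apply le_sqrt_of_sq_le
  nlinarith

/-- **Upper bound on the trace distance to the maximally mixed state.**
For a density matrix `ρ` on `ℂ^(2^nA)` with eigenvalues `λ i`, the trace distance
`(1/2) ∑ i, |λ i - 1/2^nA|` is bounded above by `√((nA - S(ρ))/2)`, where
`S(ρ) = -∑ i, λ i * log₂ (λ i)` is the von Neumann entropy in bits. -/
theorem trace_distance_le_sqrt_entropy_deficit
    (nA : ℕ) (hnA : 1 ≤ nA)
    (ρ : Matrix (Fin (2 ^ nA)) (Fin (2 ^ nA)) ℂ)
    (hρ : ρ.PosSemidef) (htr : ρ.trace = 1) :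
    (1 / 2) * ∑ i, |hρ.isHermitian.eigenvalues i - 1 / (2 ^ nA : ℝ)| ≤
      Real.sqrt (((nA : ℝ) -
        (- ∑ i, hρ.isHermitian.eigenvalues i * Real.logb 2 (hρ.isHermitian.eigenvalues i))) / 2) :=
  trace_distance_le_sqrt_entropy_deficit_general nA ρ hρ htr
end

section
/- Let n_A ≥ 1, d = 2^{n_A}, let k ≥ 1 be a real number, and let ρ be a density matrix on ℂ^d with eigenvalues λ_1, …, λ_d. Then (1/(2k))·(∑_{i=1}^d λ_i^k − d^{1−k}) ≤ (1/2)·∑_{i=1}^d |λ_i − 1/d|. Equivalently, writing the Renyi-k entropy in bits as R_k(ρ) = (1/(1−k))·log₂(∑_i λ_i^k) for k ≠ 1, the trace distance between ρ and the maximally mixed state is bounded below by (1/(2k))·(2^{(1−k)R_k(ρ)} − 2^{(1−k)n_A}). -/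
/-!
On `[0, 1]` the map `x ↦ x ^ k` (`k ≥ 1`) has derivative `k x ^ (k - 1) ≤ k`, so it is
`k`-Lipschitz there. The eigenvalues of a density matrix lie in `[0, 1]`, and so does `1 / d`;
summing `λᵢ ^ k - (1 / d) ^ k ≤ k |λᵢ - 1 / d|` over the `d` eigenvalues gives
`∑ λᵢ ^ k - d ^ (1 - k) ≤ k ∑ |λᵢ - 1 / d|`.
-/

open Real Finset
open scoped ComplexOrder

theorem Real.abs_rpow_sub_rpow_le_of_mem_Icc {a b k : ℝ} (ha : a ∈ Set.Icc 0 1)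
    (hb : b ∈ Set.Icc 0 1) (hk : 1 ≤ k) : |a ^ k - b ^ k| ≤ k * |a - b| := by
  have hderiv : ∀ x ∈ Set.Icc (0 : ℝ) 1,
      HasDerivWithinAt (fun x : ℝ => x ^ k) (k * x ^ (k - 1)) (Set.Icc 0 1) x :=
    fun x _ => (hasDerivAt_rpow_const (Or.inr hk)).hasDerivWithinAt
  have hbound : ∀ x ∈ Set.Icc (0 : ℝ) 1, ‖k * x ^ (k - 1)‖ ≤ k := fun x ⟨hx0, hx1⟩ => by
    rw [norm_mul, norm_of_nonneg (by linarith), norm_of_nonneg (rpow_nonneg hx0 _)]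
    exact mul_le_of_le_one_right (by linarith) (rpow_le_one hx0 hx1 (by linarith))
  simpa only [norm_eq_abs] using
    (convex_Icc 0 1).norm_image_sub_le_of_norm_hasDerivWithin_le hderiv hbound hb ha

theorem Real.sum_rpow_sub_card_mul_rpow_le {ι : Type*} [Fintype ι] {w : ι → ℝ} {c k : ℝ}
    (hw : ∀ i, w i ∈ Set.Icc 0 1) (hc : c ∈ Set.Icc 0 1) (hk : 1 ≤ k) :
    ∑ i, w i ^ k - Fintype.card ι * c ^ k ≤ k * ∑ i, |w i - c| := by
  rw [← nsmul_eq_mul, ← card_univ, ← sum_const, ← sum_sub_distrib, mul_sum]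
  exact sum_le_sum fun i _ =>
    (le_abs_self _).trans (abs_rpow_sub_rpow_le_of_mem_Icc (hw i) hc hk)

theorem Real.mul_one_div_rpow {d : ℝ} (hd : 0 < d) (k : ℝ) : d * (1 / d) ^ k = d ^ (1 - k) := by
  rw [one_div, inv_rpow hd.le, rpow_sub hd, rpow_one, div_eq_mul_inv]

namespace Matrix.PosSemidef

variable {n : Type*} [Fintype n] [DecidableEq n] {ρ : Matrix n n ℂ}

theorem sum_eigenvalues_eq_one (hρ : ρ.PosSemidef) (htr : ρ.trace = 1) :
    ∑ i, hρ.isHermitian.eigenvalues i = 1 := by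
  have h := hρ.isHermitian.trace_eq_sum_eigenvalues
  rw [htr, ← RCLike.ofReal_sum, ← RCLike.ofReal_one, eq_comm] at h
  exact RCLike.ofReal_inj.mp h

theorem eigenvalues_mem_Icc (hρ : ρ.PosSemidef) (htr : ρ.trace = 1) (i : n) :
    hρ.isHermitian.eigenvalues i ∈ Set.Icc 0 1 :=
  ⟨hρ.eigenvalues_nonneg i, hρ.sum_eigenvalues_eq_one htr ▸
    single_le_sum (fun j _ => hρ.eigenvalues_nonneg j) (mem_univ i)⟩

theorem sum_eigenvalues_rpow_sub_le [Nonempty n] (hρ : ρ.PosSemidef) (htr : ρ.trace = 1)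
    {k : ℝ} (hk : 1 ≤ k) :
    ∑ i, hρ.isHermitian.eigenvalues i ^ k - (Fintype.card n : ℝ) ^ (1 - k) ≤
      k * ∑ i, |hρ.isHermitian.eigenvalues i - 1 / Fintype.card n| := by
  have hd : (0 : ℝ) < Fintype.card n := by exact_mod_cast Fintype.card_pos
  rw [← mul_one_div_rpow hd]
  exact sum_rpow_sub_card_mul_rpow_le (hρ.eigenvalues_mem_Icc htr)
    ⟨by positivity, div_le_one_of_le₀ (by exact_mod_cast Fintype.card_pos) hd.le⟩ hk

end Matrix.PosSemidef

theorem tsallis_lower_bound_trace_distance_general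
    (nA : ℕ) (k : ℝ) (hk : 1 ≤ k)
    (ρ : Matrix (Fin (2 ^ nA)) (Fin (2 ^ nA)) ℂ)
    (hρ : ρ.PosSemidef) (htr : ρ.trace = 1) :
    (1 / (2 * k)) * ((∑ i, hρ.isHermitian.eigenvalues i ^ k) - (2 ^ nA : ℝ) ^ ((1 : ℝ) - k)) ≤
      (1 / 2) * ∑ i, |hρ.isHermitian.eigenvalues i - 1 / (2 ^ nA : ℝ)| := by
  have hsum := hρ.sum_eigenvalues_rpow_sub_le htr hk
  simp only [Fintype.card_fin, Nat.cast_pow, Nat.cast_ofNat] at hsum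
  have hk0 : 0 < k := by linarith
  calc _ ≤ (1 / (2 * k)) * (k * ∑ i, |hρ.isHermitian.eigenvalues i - 1 / (2 ^ nA : ℝ)|) := by
        gcongr
    _ = _ := by
        rw [← mul_assoc]
        congr 1
        field_simp

/-- **Lower bound on the trace distance to the maximally mixed state via Renyi/Tsallis entropies.**
For a density matrix `ρ` on `ℂ^(2^nA)` with eigenvalues `λ i` and a real `k ≥ 1`,
`(1/(2k)) * (∑ i, (λ i)^k - (2^nA)^(1-k)) ≤ (1/2) * ∑ i, |λ i - 1/2^nA|`.
In terms of the Renyi-`k` entropy `R_k = (1/(1-k)) * log₂ (∑ i, (λ i)^k)`, the left-hand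
side equals `(1/(2k)) * (2^((1-k)*R_k) - 2^((1-k)*nA))`. -/
theorem tsallis_lower_bound_trace_distance
    (nA : ℕ) (hnA : 1 ≤ nA) (k : ℝ) (hk : 1 ≤ k)
    (ρ : Matrix (Fin (2 ^ nA)) (Fin (2 ^ nA)) ℂ)
    (hρ : ρ.PosSemidef) (htr : ρ.trace = 1) :
    (1 / (2 * k)) * ((∑ i, hρ.isHermitian.eigenvalues i ^ k) - (2 ^ nA : ℝ) ^ ((1 : ℝ) - k)) ≤
      (1 / 2) * ∑ i, |hρ.isHermitian.eigenvalues i - 1 / (2 ^ nA : ℝ)| :=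
  tsallis_lower_bound_trace_distance_general nA k hk ρ hρ htr
end

section
/- Let n_A ≥ 1, d = 2^{n_A}, and let ρ be a density matrix on ℂ^d with eigenvalues λ_1, …, λ_d and von Neumann entropy S(ρ) = −∑_i λ_i log₂ λ_i. Then 1 − S(ρ)/n_A ≤ (1/2)·∑_{i=1}^d |λ_i − 1/d| + 1/n_A. (This is the precise, non-asymptotic form of the asymptotic lower bound 1 − S(ρ)/n_A ≲ (1/2)‖ρ − (1/d)I‖₁ as n_A → ∞.) -/
/-!
Write `d = 2 ^ nA` and `p` for the spectrum of `ρ`. Then `nA - S(ρ) = ∑ pᵢ log₂ (d pᵢ)`, and each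
term is bounded by `nA (pᵢ - 1/d)⁺ + pᵢ`: it is nonpositive when `d pᵢ ≤ 1`, and otherwise
`log₂ (d pᵢ)` is at most `nA` (as `pᵢ ≤ 1`) on the part `pᵢ - 1/d` and at most `d pᵢ` on the
remaining `1/d`. Since `p - 1/d` sums to zero, its positive parts add up to the trace distance.
-/

open Real Finset
open scoped ComplexOrder

lemma Real.logb_two_le_self {x : ℝ} (hx : 0 ≤ x) : logb 2 x ≤ x := by
  rcases le_or_gt x 1 with hx1 | hx1
  · exact (logb_nonpos one_lt_two hx hx1).trans hx
  · rw [logb_le_iff_le_rpow one_lt_two (by linarith)]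
    have bernoulli := one_add_mul_self_le_rpow_one_add (s := 1) (by norm_num) hx1.le
    norm_num at bernoulli
    linarith

lemma Finset.sum_posPart_eq_half_sum_abs {ι K : Type*} [Field K] [LinearOrder K]
    [IsStrictOrderedRing K] (s : Finset ι) (x : ι → K) (hx : ∑ i ∈ s, x i = 0) :
    ∑ i ∈ s, (x i)⁺ = 1 / 2 * ∑ i ∈ s, |x i| := by
  have two_posPart (a : K) : 2 * a⁺ = |a| + a := by
    linear_combination posPart_add_negPart a + posPart_sub_negPart a
  have : 2 * ∑ i ∈ s, (x i)⁺ = ∑ i ∈ s, |x i| := by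
    simp only [mul_sum, two_posPart, sum_add_distrib, hx, add_zero]
  linear_combination this / 2

lemma mul_logb_add_logb_le {d p : ℝ} (hd : 1 ≤ d) (hp0 : 0 ≤ p) (hp1 : p ≤ 1) :
    p * (logb 2 d + logb 2 p) ≤ logb 2 d * (p - 1 / d)⁺ + p := by
  have hd0 : 0 < d := by linarith
  rcases hp0.eq_or_lt with rfl | hp_pos
  · rw [zero_mul, add_zero]
    exact mul_nonneg (logb_nonneg one_lt_two hd) (posPart_nonneg _)
  rw [← logb_mul hd0.ne' hp_pos.ne']
  rcases le_or_gt p (1 / d) with hsmall | hlarge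
  · have : logb 2 (d * p) ≤ 0 :=
      logb_nonpos one_lt_two (by positivity) (by rwa [le_div_iff₀' hd0] at hsmall)
    nlinarith [posPart_nonneg (p - 1 / d), logb_nonneg one_lt_two hd]
  · have hdp : 1 ≤ d * p := by rw [div_lt_iff₀' hd0] at hlarge; linarith
    have le_logb_d : logb 2 (d * p) ≤ logb 2 d :=
      logb_le_logb_of_le one_lt_two (by linarith) (by nlinarith)
    calc p * logb 2 (d * p) = (p - 1 / d) * logb 2 (d * p) + 1 / d * logb 2 (d * p) := by ring
      _ ≤ (p - 1 / d) * logb 2 d + 1 / d * (d * p) := by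
        gcongr
        exact logb_two_le_self (by linarith)
      _ = logb 2 d * (p - 1 / d)⁺ + p := by
        rw [posPart_eq_self.2 (by linarith)]
        field_simp

lemma logb_card_sub_entropy_le {ι : Type*} [Fintype ι] (p : ι → ℝ) (hp0 : ∀ i, 0 ≤ p i)
    (hp1 : ∑ i, p i = 1) :
    logb 2 (Fintype.card ι) - (-∑ i, p i * logb 2 (p i)) ≤
      logb 2 (Fintype.card ι) * (1 / 2 * ∑ i, |p i - 1 / Fintype.card ι|) + 1 := by
  set d : ℝ := (Fintype.card ι : ℝ)
  have : Nonempty ι := by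
    by_contra h
    simp [not_nonempty_iff.mp h] at hp1
  have hd : 1 ≤ d := Nat.one_le_cast.mpr Fintype.card_pos
  have hp_le_one (i : ι) : p i ≤ 1 := hp1 ▸ single_le_sum (fun j _ ↦ hp0 j) (mem_univ i)
  have hcentered : ∑ i, (p i - 1 / d) = 0 := by
    rw [sum_sub_distrib, hp1, sum_const, card_univ, nsmul_eq_mul, mul_one_div_cancel (by positivity),
      sub_self]
  calc logb 2 d - (-∑ i, p i * logb 2 (p i)) = ∑ i, p i * (logb 2 d + logb 2 (p i)) := by
        simp only [mul_add, sum_add_distrib, ← sum_mul, hp1]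
        ring
    _ ≤ ∑ i, (logb 2 d * (p i - 1 / d)⁺ + p i) :=
        sum_le_sum fun i _ ↦ mul_logb_add_logb_le hd (hp0 i) (hp_le_one i)
    _ = logb 2 d * (1 / 2 * ∑ i, |p i - 1 / d|) + 1 := by
        rw [sum_add_distrib, ← mul_sum, sum_posPart_eq_half_sum_abs _ _ hcentered, hp1]

lemma Matrix.IsHermitian.sum_eigenvalues_eq_one {𝕜 n : Type*} [RCLike 𝕜] [Fintype n]
    [DecidableEq n] {A : Matrix n n 𝕜} (hA : A.IsHermitian) (htr : A.trace = 1) :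
    ∑ i, hA.eigenvalues i = 1 := by
  have h := hA.trace_eq_sum_eigenvalues
  rw [htr] at h
  exact_mod_cast h.symm

/-- **Non-asymptotic form of the asymptotic lower bound from the Fannes–Audenaert inequality.**
For a density matrix `ρ` on `ℂ^(2^nA)` with eigenvalues `λ i` and von Neumann entropy
`S(ρ) = -∑ i, λ i * log₂ (λ i)` in bits,
`1 - S(ρ)/nA ≤ (1/2) * ∑ i, |λ i - 1/2^nA| + 1/nA`. -/
theorem entropy_deficit_le_trace_distance_add
    (nA : ℕ) (hnA : 1 ≤ nA)
    (ρ : Matrix (Fin (2 ^ nA)) (Fin (2 ^ nA)) ℂ)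
    (hρ : ρ.PosSemidef) (htr : ρ.trace = 1) :
    1 - (- ∑ i, hρ.isHermitian.eigenvalues i * Real.logb 2 (hρ.isHermitian.eigenvalues i)) / (nA : ℝ) ≤
      (1 / 2) * ∑ i, |hρ.isHermitian.eigenvalues i - 1 / (2 ^ nA : ℝ)| + 1 / (nA : ℝ) := by
  have hn : (0 : ℝ) < nA := by exact_mod_cast hnA
  have key := logb_card_sub_entropy_le _ hρ.eigenvalues_nonneg
    (hρ.isHermitian.sum_eigenvalues_eq_one htr)
  rw [Fintype.card_fin, Nat.cast_pow, Nat.cast_ofNat, logb_pow, logb_self_eq_one one_lt_two,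
    mul_one] at key
  have := div_le_div_of_nonneg_right key hn.le
  rwa [sub_div, add_div, div_self hn.ne', mul_div_cancel_left₀ _ hn.ne'] at this
end

section
/- Let d ≥ 1, let k ≥ 1 be a real number, and let p be a probability vector on d outcomes. Then (1/(2k))·(∑_{i=1}^d p_i^k − d^{1−k}) ≤ (1/2)·∑_{i=1}^d |p_i − 1/d|. -/
open Real Finset

/-!
On `[0, 1]` the map `t ↦ t ^ k` is `k`-Lipschitz: it is convex, so its secant slopes are bounded by
its derivative `k t ^ (k - 1) ≤ k`. Writing `d ^ (1 - k) = ∑ i, (1 / d) ^ k`, the Tsallis gap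
`∑ p_i ^ k - d ^ (1 - k)` is therefore at most `k ∑ |p_i - 1 / d|`.
-/

lemma rpow_sub_rpow_le_mul_sub {k x y : ℝ} (hk : 1 ≤ k) (hy : 0 ≤ y) (hyx : y ≤ x) (hx : x ≤ 1) :
    x ^ k - y ^ k ≤ k * (x - y) := by
  rcases hyx.eq_or_lt with rfl | hyx
  · simp
  have hslope : slope (· ^ k) y x ≤ k * x ^ (k - 1) :=
    (convexOn_rpow hk).slope_le_of_hasDerivAt hy (hy.trans hyx.le) hyx
      (hasDerivAt_rpow_const (Or.inr hk))
  rw [slope_def_field, div_le_iff₀ (sub_pos.2 hyx)] at hslope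
  calc x ^ k - y ^ k ≤ k * x ^ (k - 1) * (x - y) := hslope
    _ ≤ k * 1 * (x - y) := by
        gcongr
        exact rpow_le_one (hy.trans hyx.le) hx (by linarith)
    _ = k * (x - y) := by rw [mul_one]

lemma rpow_sub_rpow_le_mul_abs_sub {k x y : ℝ} (hk : 1 ≤ k) (hx₀ : 0 ≤ x) (hx₁ : x ≤ 1)
    (hy₀ : 0 ≤ y) : x ^ k - y ^ k ≤ k * |x - y| := by
  rcases le_total y x with hyx | hxy
  · rw [abs_of_nonneg (sub_nonneg.2 hyx)]
    exact rpow_sub_rpow_le_mul_sub hk hy₀ hyx hx₁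
  · have : x ^ k ≤ y ^ k := rpow_le_rpow hx₀ hxy (by linarith)
    have : 0 ≤ k * |x - y| := by positivity
    linarith

lemma sum_rpow_sub_sum_rpow_le {ι : Type*} (s : Finset ι) {k : ℝ} (hk : 1 ≤ k) {p q : ι → ℝ}
    (hp₀ : ∀ i ∈ s, 0 ≤ p i) (hp₁ : ∀ i ∈ s, p i ≤ 1) (hq₀ : ∀ i ∈ s, 0 ≤ q i) :
    ∑ i ∈ s, p i ^ k - ∑ i ∈ s, q i ^ k ≤ k * ∑ i ∈ s, |p i - q i| := by
  rw [← sum_sub_distrib, mul_sum]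
  exact sum_le_sum fun i hi ↦ rpow_sub_rpow_le_mul_abs_sub hk (hp₀ i hi) (hp₁ i hi) (hq₀ i hi)

lemma natCast_rpow_one_sub_eq_sum_inv_rpow {d : ℕ} (hd : 0 < d) (k : ℝ) :
    (d : ℝ) ^ (1 - k) = ∑ _i : Fin d, (1 / (d : ℝ)) ^ k := by
  have hd₀ : (0 : ℝ) < d := by exact_mod_cast hd
  rw [sum_const, card_univ, Fintype.card_fin, nsmul_eq_mul, rpow_sub hd₀, rpow_one, one_div,
    inv_rpow hd₀.le, div_eq_mul_inv]

/-- **Tsallis lower bound for the distance to the uniform distribution.**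
For a probability vector `p` on `d ≥ 1` outcomes and a real `k ≥ 1`,
`(1/(2k)) * (∑ i, (p i)^k - d^(1-k)) ≤ (1/2) * ∑ i, |p i - 1/d|`. -/
theorem tsallis_lower_bound_prob_distance
    (d : ℕ) (hd : 1 ≤ d) (k : ℝ) (hk : 1 ≤ k) (p : Fin d → ℝ)
    (hp : ∀ i, 0 ≤ p i) (hsum : ∑ i, p i = 1) :
    (1 / (2 * k)) * ((∑ i, p i ^ k) - (d : ℝ) ^ ((1 : ℝ) - k)) ≤
      (1 / 2) * ∑ i, |p i - 1 / (d : ℝ)| := by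
  have hp₁ (i : Fin d) : p i ≤ 1 := hsum ▸ single_le_sum (fun j _ ↦ hp j) (mem_univ i)
  have gap_le : ∑ i, p i ^ k - (d : ℝ) ^ ((1 : ℝ) - k) ≤ k * ∑ i, |p i - 1 / (d : ℝ)| := by
    rw [natCast_rpow_one_sub_eq_sum_inv_rpow hd]
    exact sum_rpow_sub_sum_rpow_le _ hk (fun i _ ↦ hp i) (fun i _ ↦ hp₁ i)
      (fun _ _ ↦ by positivity)
  have hk₀ : 0 < k := by linarith
  rw [one_div_mul_eq_div, div_le_iff₀ (by positivity)]
  linarith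
end

section
/- Let d ≥ 2 and let p and q be probability vectors on d outcomes. Set T = (1/2)·∑_{i=1}^d |p_i − q_i|. Then the Fannes–Audenaert inequality holds: |H(p) − H(q)| ≤ T·log₂(d − 1) + H_b(T), where H_b(t) = −t log₂ t − (1 − t) log₂(1 − t) is the binary entropy function (with H_b(0) = H_b(1) = 0). -/
/-!
Couple `p` and `q` maximally: the joint distribution `w` with marginals `p` and `q` that keeps
mass `min (p i) (q i)` on the diagonal has off-diagonal mass exactly `T`. Then `H(p) ≤ H(w)`, and
Fano's inequality `H(w) ≤ H(q) + T log (d - 1) + H_b(T)` is Gibbs' inequality comparing `w` with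
`q j · K(i | j)`, where `K` is the `d`-ary symmetric channel with error probability `T`.
Exchanging `p` and `q` bounds the absolute value.
-/

open Real Finset

theorem mul_log_sub_mul_log_le_sub {w v : ℝ} (hw : 0 ≤ w) (hv : 0 ≤ v) (hwv : 0 < w → 0 < v) :
    w * log v - w * log w ≤ v - w := by
  rcases hw.eq_or_lt with rfl | hw
  · simpa using hv
  calc w * log v - w * log w = w * log (v / w) := by
        rw [log_div (hwv hw).ne' hw.ne']; ring
    _ ≤ w * (v / w - 1) := by gcongr; exact log_le_sub_one_of_pos (div_pos (hwv hw) hw)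
    _ = v - w := by field_simp

theorem sum_mul_log_le_sum_mul_log_of_sum_le {α : Type*} [Fintype α] {w v : α → ℝ}
    (hw : ∀ x, 0 ≤ w x) (hv : ∀ x, 0 ≤ v x) (hwv : ∀ x, 0 < w x → 0 < v x)
    (hsum : ∑ x, v x ≤ ∑ x, w x) :
    ∑ x, w x * log (v x) ≤ ∑ x, w x * log (w x) := by
  have := sum_le_sum fun x (_ : x ∈ univ) => mul_log_sub_mul_log_le_sub (hw x) (hv x) (hwv x)
  rw [sum_sub_distrib, sum_sub_distrib] at this
  linarith

theorem negMulLog_sum_le_sum_negMulLog {α : Type*} (s : Finset α) {w : α → ℝ}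
    (hw : ∀ i ∈ s, 0 ≤ w i) :
    negMulLog (∑ i ∈ s, w i) ≤ ∑ i ∈ s, negMulLog (w i) := by
  have hle : ∀ i ∈ s, w i * log (w i) ≤ w i * log (∑ j ∈ s, w j) := fun i hi => by
    rcases (hw i hi).eq_or_lt with h | h
    · simp [← h]
    · exact mul_le_mul_of_nonneg_left (log_le_log h (single_le_sum hw hi)) h.le
  have := sum_le_sum hle
  rw [← sum_mul] at this
  simp only [negMulLog, neg_mul, sum_neg_distrib]
  linarith

noncomputable def shannonEntropy {α : Type*} [Fintype α] (p : α → ℝ) : ℝ :=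
  ∑ x, negMulLog (p x)

section Fintype

variable {ι : Type*} [Fintype ι]

theorem shannonEntropy_le_of_fst_marginal {κ : Type*} [Fintype κ] {w : ι × κ → ℝ} {p : ι → ℝ}
    (hw : ∀ x, 0 ≤ w x) (hp : ∀ i, ∑ j, w (i, j) = p i) :
    shannonEntropy p ≤ shannonEntropy w := by
  rw [shannonEntropy, shannonEntropy, Fintype.sum_prod_type]
  exact sum_le_sum fun i _ => hp i ▸ negMulLog_sum_le_sum_negMulLog _ fun j _ => hw _

theorem shannonEntropy_div_log (b : ℝ) (p : ι → ℝ) :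
    shannonEntropy p / log b = -∑ i, p i * logb b (p i) := by
  simp only [shannonEntropy, negMulLog, logb, sum_div, ← sum_neg_distrib]
  exact sum_congr rfl fun i _ => by ring

noncomputable def totalVariation (p q : ι → ℝ) : ℝ := (1 / 2) * ∑ i, |p i - q i|

theorem totalVariation_comm (p q : ι → ℝ) : totalVariation p q = totalVariation q p := by
  simp only [totalVariation, abs_sub_comm]

theorem eq_of_totalVariation_eq_zero {p q : ι → ℝ} (h : totalVariation p q = 0) : p = q := by
  have hsum : ∑ i, |p i - q i| = 0 := by rw [totalVariation] at h; linarith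
  funext i
  rw [sum_eq_zero_iff_of_nonneg fun i _ => abs_nonneg _] at hsum
  exact sub_eq_zero.mp (abs_eq_zero.mp (hsum i (mem_univ i)))

theorem sum_sub_min_eq_totalVariation {p q : ι → ℝ} (h : ∑ i, p i = ∑ i, q i) :
    ∑ i, (p i - min (p i) (q i)) = totalVariation p q := by
  have hterm : ∀ i, p i - min (p i) (q i) = (|p i - q i| + (p i - q i)) / 2 := by
    intro i
    rcases le_total (p i) (q i) with hpq | hqp
    · rw [min_eq_left hpq, abs_of_nonpos (sub_nonpos.mpr hpq)]; ring
    · rw [min_eq_right hqp, abs_of_nonneg (sub_nonneg.mpr hqp)]; ring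
  simp only [hterm, ← sum_div, sum_add_distrib, sum_sub_distrib, h, totalVariation]
  ring

theorem totalVariation_nonneg (p q : ι → ℝ) : 0 ≤ totalVariation p q := by
  unfold totalVariation; positivity

variable [DecidableEq ι]

-- The entry at `(i, j)` is the probability that input `j` is received as `i`.
noncomputable def qarySymmetricChannel (ε : ℝ) (x : ι × ι) : ℝ :=
  if x.1 = x.2 then 1 - ε else ε / (Fintype.card ι - 1)

theorem qarySymmetricChannel_nonneg {ε : ℝ} (hε₀ : 0 ≤ ε) (hε₁ : ε ≤ 1) (x : ι × ι) :
    0 ≤ qarySymmetricChannel ε x := by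
  have : (1 : ℝ) ≤ Fintype.card ι := Nat.one_le_cast.mpr (Fintype.card_pos_iff.mpr ⟨x.1⟩)
  unfold qarySymmetricChannel
  split_ifs
  exacts [sub_nonneg.mpr hε₁, div_nonneg hε₀ (sub_nonneg.mpr this)]

theorem sum_qarySymmetricChannel (ε : ℝ) (hcard : 2 ≤ Fintype.card ι) (j : ι) :
    ∑ i, qarySymmetricChannel ε (i, j) = 1 := by
  have hn : (0 : ℝ) < Fintype.card ι - 1 := sub_pos.mpr (Nat.one_lt_cast.mpr hcard)
  have hsplit : ∀ i, qarySymmetricChannel ε (i, j) =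
      ε / (Fintype.card ι - 1) + if i = j then 1 - ε - ε / (Fintype.card ι - 1) else 0 := by
    intro i
    by_cases h : i = j <;> simp [qarySymmetricChannel, h]
  simp only [hsplit, sum_add_distrib, sum_ite_eq', mem_univ, if_true, sum_const, card_univ,
    nsmul_eq_mul]
  field_simp
  ring

theorem sum_mul_log_qarySymmetricChannel {w : ι × ι → ℝ} {ε : ℝ} (htotal : ∑ x, w x = 1)
    (hdiag : ∑ i, w (i, i) = 1 - ε) (hε : 0 < ε) (hcard : 2 ≤ Fintype.card ι) :
    ∑ x, w x * log (qarySymmetricChannel ε x) = -qaryEntropy (Fintype.card ι) ε := by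
  have hn : (0 : ℝ) < Fintype.card ι - 1 := sub_pos.mpr (Nat.one_lt_cast.mpr hcard)
  set c := ε / (Fintype.card ι - 1) with hc
  have hsplit : ∀ x : ι × ι, w x * log (qarySymmetricChannel ε x) =
      w x * log c + if x.1 = x.2 then w x * (log (1 - ε) - log c) else 0 := by
    intro x
    by_cases h : x.1 = x.2
    · simp only [qarySymmetricChannel, h, if_true]; ring
    · simp [qarySymmetricChannel, h, hc]
  rw [sum_congr rfl fun x _ => hsplit x, sum_add_distrib, ← sum_mul, htotal,
    Fintype.sum_prod_type]
  simp only [sum_ite_eq, mem_univ, if_true, ← sum_mul, hdiag]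
  rw [hc, log_div hε.ne' hn.ne']
  simp only [qaryEntropy, binEntropy, log_inv]
  push_cast
  ring

theorem shannonEntropy_le_add_qaryEntropy {w : ι × ι → ℝ} {q : ι → ℝ} {ε : ℝ}
    (hw : ∀ x, 0 ≤ w x) (hq : ∀ j, ∑ i, w (i, j) = q j) (hq1 : ∑ j, q j = 1)
    (hdiag : ∑ i, w (i, i) = 1 - ε) (hε : 0 < ε) (hcard : 2 ≤ Fintype.card ι) :
    shannonEntropy w ≤ shannonEntropy q + qaryEntropy (Fintype.card ι) ε := by
  set u : ι × ι → ℝ := qarySymmetricChannel ε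
  have htotal : ∑ x, w x = 1 := by simp only [Fintype.sum_prod_type_right, hq, hq1]
  have hε₁ : ε ≤ 1 := by linarith [sum_nonneg fun i (_ : i ∈ univ) => hw (i, i)]
  have hq_pos : ∀ x, 0 < w x → 0 < q x.2 := fun x hx =>
    hx.trans_le (hq x.2 ▸ single_le_sum (fun i _ => hw (i, x.2)) (mem_univ x.1))
  have hu_pos : ∀ x, 0 < w x → 0 < u x := by
    rintro ⟨i, j⟩ hx
    by_cases h : i = j
    · subst h
      have : w (i, i) ≤ 1 - ε := hdiag ▸ single_le_sum (fun k _ => hw (k, k)) (mem_univ i)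
      simp only [u, qarySymmetricChannel, if_true]; linarith
    · simp only [u, qarySymmetricChannel, h, if_false]
      exact div_pos hε (sub_pos.mpr (Nat.one_lt_cast.mpr hcard))
  have hgibbs := sum_mul_log_le_sum_mul_log_of_sum_le (v := fun x => q x.2 * u x) hw
    (fun x => mul_nonneg ((hq x.2) ▸ sum_nonneg fun i _ => hw _)
      (qarySymmetricChannel_nonneg hε.le hε₁ x))
    (fun x hx => mul_pos (hq_pos x hx) (hu_pos x hx)) (by
      rw [htotal, Fintype.sum_prod_type_right]
      simp only [← mul_sum, u, sum_qarySymmetricChannel ε hcard, mul_one, hq1]; rfl)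
  have hcross : ∑ x, w x * log (q x.2 * u x) =
      ∑ j, q j * log (q j) - qaryEntropy (Fintype.card ι) ε := by
    have hsplit : ∀ x, w x * log (q x.2 * u x) = w x * log (q x.2) + w x * log (u x) := by
      intro x
      rcases (hw x).eq_or_lt with h | h
      · simp [← h]
      · rw [log_mul (hq_pos x h).ne' (hu_pos x h).ne', mul_add]
    rw [sum_congr rfl fun x _ => hsplit x, sum_add_distrib,
      sum_mul_log_qarySymmetricChannel htotal hdiag hε hcard, Fintype.sum_prod_type_right]
    simp only [← sum_mul, hq, sub_eq_add_neg]
  simp only [shannonEntropy, negMulLog, neg_mul, sum_neg_distrib]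
  linarith

-- Mass `min (p i) (q i)` on the diagonal; the excesses `(p - q)⁺` and `(q - p)⁺`, both of
-- total mass `totalVariation p q`, are coupled independently.
noncomputable def maximalCoupling (p q : ι → ℝ) (x : ι × ι) : ℝ :=
  (if x.1 = x.2 then min (p x.1) (q x.1) else 0) +
    (p x.1 - min (p x.1) (q x.1)) * (q x.2 - min (q x.2) (p x.2)) / totalVariation p q

theorem maximalCoupling_swap (p q : ι → ℝ) (x : ι × ι) :
    maximalCoupling q p x.swap = maximalCoupling p q x := by
  obtain ⟨i, j⟩ := x
  by_cases h : i = j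
  · subst h; simp [maximalCoupling, min_comm, totalVariation_comm, mul_comm]
  · simp [maximalCoupling, h, Ne.symm h, totalVariation_comm, mul_comm]

theorem maximalCoupling_nonneg {p q : ι → ℝ} (hp : ∀ i, 0 ≤ p i) (hq : ∀ i, 0 ≤ q i)
    (x : ι × ι) : 0 ≤ maximalCoupling p q x := by
  have hdiag : 0 ≤ if x.1 = x.2 then min (p x.1) (q x.1) else 0 := by
    split_ifs
    exacts [le_min (hp _) (hq _), le_rfl]
  have := totalVariation_nonneg p q
  have := sub_nonneg.mpr (min_le_left (p x.1) (q x.1))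
  have := sub_nonneg.mpr (min_le_left (q x.2) (p x.2))
  unfold maximalCoupling
  positivity

theorem sum_maximalCoupling_fst {p q : ι → ℝ} (h : ∑ i, p i = ∑ i, q i) (i : ι) :
    ∑ j, maximalCoupling p q (i, j) = p i := by
  have hexcess : p i - min (p i) (q i) ≤ totalVariation p q :=
    sum_sub_min_eq_totalVariation h ▸
      single_le_sum (fun j _ => sub_nonneg.mpr (min_le_left (p j) (q j))) (mem_univ i)
  simp only [maximalCoupling, sum_add_distrib, sum_ite_eq, mem_univ, if_true, ← sum_div,
    ← mul_sum, sum_sub_min_eq_totalVariation h.symm, totalVariation_comm q p]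
  rcases (totalVariation_nonneg p q).eq_or_lt with h0 | hpos
  · rw [← h0, div_zero, add_zero]
    linarith [min_le_left (p i) (q i)]
  · rw [mul_div_cancel_right₀ _ hpos.ne']; ring

theorem sum_maximalCoupling_snd {p q : ι → ℝ} (h : ∑ i, p i = ∑ i, q i) (j : ι) :
    ∑ i, maximalCoupling p q (i, j) = q j := by
  simp only [← maximalCoupling_swap p q, Prod.swap_prod_mk, sum_maximalCoupling_fst h.symm]

theorem sum_maximalCoupling_diag {p q : ι → ℝ} (h : ∑ i, p i = ∑ i, q i) :
    ∑ i, maximalCoupling p q (i, i) = ∑ i, p i - totalVariation p q := by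
  have hexcess : ∀ i, (p i - min (p i) (q i)) * (q i - min (q i) (p i)) = 0 := by
    intro i
    rcases le_total (p i) (q i) with hpq | hqp
    · rw [min_eq_left hpq]; ring
    · rw [min_eq_left hqp]; ring
  simp only [maximalCoupling, if_true, hexcess, zero_div, add_zero]
  rw [← sum_sub_min_eq_totalVariation h, sum_sub_distrib]
  ring

theorem shannonEntropy_sub_shannonEntropy_le {p q : ι → ℝ} (hp : ∀ i, 0 ≤ p i)
    (hq : ∀ i, 0 ≤ q i) (hp1 : ∑ i, p i = 1) (hq1 : ∑ i, q i = 1) (hcard : 2 ≤ Fintype.card ι) :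
    shannonEntropy p - shannonEntropy q ≤ qaryEntropy (Fintype.card ι) (totalVariation p q) := by
  have hpq : ∑ i, p i = ∑ i, q i := hp1.trans hq1.symm
  rcases (totalVariation_nonneg p q).eq_or_lt with h0 | hpos
  · rw [← h0, qaryEntropy_zero, eq_of_totalVariation_eq_zero h0.symm, sub_self]
  have hw := maximalCoupling_nonneg hp hq
  have hmarginal := shannonEntropy_le_of_fst_marginal hw (sum_maximalCoupling_fst hpq)
  have hfano := shannonEntropy_le_add_qaryEntropy hw (sum_maximalCoupling_snd hpq) hq1
    (by rw [sum_maximalCoupling_diag hpq, hp1]) hpos hcard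
  linarith

end Fintype

theorem qaryEntropy_div_log (n : ℕ) (t b : ℝ) :
    qaryEntropy n t / log b =
      t * logb b (n - 1) + (-t * logb b t - (1 - t) * logb b (1 - t)) := by
  simp only [qaryEntropy, binEntropy, log_inv, logb]
  push_cast
  ring

/-- **The Fannes–Audenaert inequality for probability vectors.**
For probability vectors `p` and `q` on `d ≥ 2` outcomes, with
`T = (1/2) * ∑ i, |p i - q i|` and Shannon entropies in bits,
`|H(p) - H(q)| ≤ T * log₂ (d-1) + H_b(T)` where
`H_b(t) = -t * log₂ t - (1-t) * log₂ (1-t)` is the binary entropy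
(with the conventions `H_b 0 = H_b 1 = 0`, which hold since `log₂ 0 = 0` in Lean). -/
theorem fannes_audenaert
    (d : ℕ) (hd : 2 ≤ d) (p q : Fin d → ℝ)
    (hp : ∀ i, 0 ≤ p i) (hpsum : ∑ i, p i = 1)
    (hq : ∀ i, 0 ≤ q i) (hqsum : ∑ i, q i = 1) :
    |(- ∑ i, p i * Real.logb 2 (p i)) - (- ∑ i, q i * Real.logb 2 (q i))| ≤
      ((1 / 2) * ∑ i, |p i - q i|) * Real.logb 2 ((d : ℝ) - 1) +
        (-(((1 / 2) * ∑ i, |p i - q i|)) * Real.logb 2 ((1 / 2) * ∑ i, |p i - q i|)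
          - (1 - (1 / 2) * ∑ i, |p i - q i|) *
              Real.logb 2 (1 - (1 / 2) * ∑ i, |p i - q i|)) := by
  have hcard : 2 ≤ Fintype.card (Fin d) := (Fintype.card_fin d).symm ▸ hd
  have hnats : |shannonEntropy p - shannonEntropy q| ≤
      qaryEntropy (Fintype.card (Fin d)) (totalVariation p q) := by
    rw [abs_sub_le_iff]
    refine ⟨shannonEntropy_sub_shannonEntropy_le hp hq hpsum hqsum hcard, ?_⟩
    rw [totalVariation_comm]
    exact shannonEntropy_sub_shannonEntropy_le hq hp hqsum hpsum hcard
  rw [Fintype.card_fin] at hnats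
  have hlog2 : 0 < log 2 := log_pos one_lt_two
  rw [← shannonEntropy_div_log, ← shannonEntropy_div_log, ← sub_div, abs_div, abs_of_pos hlog2]
  calc _ ≤ qaryEntropy d (totalVariation p q) / log 2 := by gcongr
    _ = _ := qaryEntropy_div_log d _ 2
end

section
/- Let ρ and σ be density matrices on ℂ^{m·n}, indexed by pairs (i, j) with i ranging over m values (subsystem A) and j over n values (subsystem B). Define the partial trace over B by (Tr_B X)_{i,i'} = ∑_j X_{(i,j),(i',j)}. Then the trace norm is monotone under partial trace: the sum of the absolute values of the eigenvalues of the Hermitian matrix Tr_B(ρ − σ) is at most the sum of the absolute values of the eigenvalues of the Hermitian matrix ρ − σ, i.e. ‖Tr_B(ρ) − Tr_B(σ)‖₁ ≤ ‖ρ − σ‖₁. -/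
open Real Finset
open scoped ComplexOrder

/-- The partial trace over the second tensor factor (subsystem `B`):
`(Tr_B X) i i' = ∑ j, X (i, j) (i', j)`. -/
noncomputable def ptraceB (m n : ℕ) (X : Matrix (Fin m × Fin n) (Fin m × Fin n) ℂ) :
    Matrix (Fin m) (Fin m) ℂ :=
  Matrix.of fun i i' => ∑ j : Fin n, X (i, j) (i', j)

/-!
Split `ρ - σ = P - N` into its positive and negative parts, so that `‖ρ - σ‖₁ = tr P + tr N`.
The partial trace is linear, positive and trace preserving, hence
`Tr_B ρ - Tr_B σ = Tr_B P - Tr_B N` is again a difference of positive matrices with the same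
traces. For any such splitting `A = X - Y`, the eigenvalue of `A` at a unit eigenvector `v` is
`⟪v, X v⟫ - ⟪v, Y v⟫`, so summing over an orthonormal eigenbasis gives
`‖A‖₁ ≤ ∑ (⟪v, X v⟫ + ⟪v, Y v⟫) = tr X + tr Y`.
-/

namespace Matrix

variable {𝕜 ι : Type*} [RCLike 𝕜] [Fintype ι]

theorem trace_eq_sum_star_col_dotProduct {R : Type*} [CommRing R] [StarRing R] [DecidableEq ι]
    (U : unitaryGroup ι R) (X : Matrix ι ι R) :
    X.trace = ∑ i, star (col (U : Matrix ι ι R) i) ⬝ᵥ (X *ᵥ col (U : Matrix ι ι R) i) := by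
  calc X.trace = (star (U : Matrix ι ι R) * X * U).trace := by
        rw [trace_mul_comm, ← mul_assoc, Unitary.mul_star_self_of_mem U.2, one_mul]
    _ = _ := by simp [trace, mul_apply, dotProduct, mulVec, Finset.mul_sum, mul_assoc]

theorem PosSemidef.re_dotProduct_mulVec_nonneg {X : Matrix ι ι 𝕜} (hX : X.PosSemidef)
    (v : ι → 𝕜) :
    0 ≤ RCLike.re (star v ⬝ᵥ (X *ᵥ v)) :=
  (RCLike.nonneg_iff.mp (hX.dotProduct_mulVec_nonneg v)).1

namespace IsHermitian

variable [DecidableEq ι] {A : Matrix ι ι 𝕜}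

theorem sum_abs_eigenvalues_le_of_eq_sub (hA : A.IsHermitian) {X Y : Matrix ι ι 𝕜}
    (hX : X.PosSemidef) (hY : Y.PosSemidef) (hAXY : A = X - Y) :
    ∑ i, |hA.eigenvalues i| ≤ RCLike.re X.trace + RCLike.re Y.trace := by
  set b : ι → ι → 𝕜 := fun i => col (hA.eigenvectorUnitary : Matrix ι ι 𝕜) i
  have heig (i : ι) : hA.eigenvalues i =
      RCLike.re (star (b i) ⬝ᵥ (X *ᵥ b i)) - RCLike.re (star (b i) ⬝ᵥ (Y *ᵥ b i)) := by
    subst hAXY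
    rw [hA.eigenvalues_eq, sub_mulVec, dotProduct_sub, map_sub]
    rfl
  calc ∑ i, |hA.eigenvalues i|
      ≤ ∑ i, (RCLike.re (star (b i) ⬝ᵥ (X *ᵥ b i)) + RCLike.re (star (b i) ⬝ᵥ (Y *ᵥ b i))) := by
        refine sum_le_sum fun i _ => ?_
        rw [heig]
        have hXi := hX.re_dotProduct_mulVec_nonneg (b i)
        have hYi := hY.re_dotProduct_mulVec_nonneg (b i)
        exact abs_sub_le_iff.mpr ⟨by linarith, by linarith⟩
    _ = RCLike.re X.trace + RCLike.re Y.trace := by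
        rw [sum_add_distrib, trace_eq_sum_star_col_dotProduct hA.eigenvectorUnitary X,
          trace_eq_sum_star_col_dotProduct hA.eigenvectorUnitary Y, map_sum, map_sum]

theorem exists_posSemidef_sub_eq (hA : A.IsHermitian) :
    ∃ X Y : Matrix ι ι 𝕜, X.PosSemidef ∧ Y.PosSemidef ∧ A = X - Y ∧
      RCLike.re X.trace + RCLike.re Y.trace = ∑ i, |hA.eigenvalues i| := by
  set U : Matrix ι ι 𝕜 := (hA.eigenvectorUnitary : Matrix ι ι 𝕜)
  set conjDiag : (ι → ℝ) → Matrix ι ι 𝕜 := fun d => U * diagonal (RCLike.ofReal ∘ d) * star U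
  have posSemidef_conjDiag {d : ι → ℝ} (hd : 0 ≤ d) : (conjDiag d).PosSemidef :=
    (PosSemidef.diagonal fun i => RCLike.ofReal_nonneg.mpr (hd i)).mul_mul_conjTranspose_same U
  have re_trace_conjDiag (d : ι → ℝ) : RCLike.re (conjDiag d).trace = ∑ i, d i := by
    rw [trace_mul_cycle, Unitary.star_mul_self_of_mem hA.eigenvectorUnitary.2, one_mul,
      trace_diagonal, map_sum]
    simp only [Function.comp_apply, RCLike.ofReal_re]
  have conjDiag_sub (d e : ι → ℝ) : conjDiag (d - e) = conjDiag d - conjDiag e := by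
    simp only [conjDiag, ← sub_mul, ← mul_sub, diagonal_sub, Function.comp_def, Pi.sub_apply,
      RCLike.ofReal_sub]
  refine ⟨conjDiag (hA.eigenvalues⁺), conjDiag (hA.eigenvalues⁻), posSemidef_conjDiag
    (posPart_nonneg _), posSemidef_conjDiag (negPart_nonneg _), ?_, ?_⟩
  · rw [← conjDiag_sub, posPart_sub_negPart]
    exact hA.spectral_theorem
  · simp_rw [re_trace_conjDiag, ← sum_add_distrib, Pi.posPart_apply, Pi.negPart_apply,
      posPart_add_negPart]

end IsHermitian
end Matrix

theorem ptraceB_sub {m n : ℕ} (X Y : Matrix (Fin m × Fin n) (Fin m × Fin n) ℂ) :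
    ptraceB m n (X - Y) = ptraceB m n X - ptraceB m n Y := by
  ext i i'
  simp [ptraceB]

theorem trace_ptraceB {m n : ℕ} (X : Matrix (Fin m × Fin n) (Fin m × Fin n) ℂ) :
    (ptraceB m n X).trace = X.trace := by
  simp [ptraceB, Matrix.trace, Fintype.sum_prod_type]

theorem ptraceB_eq_sum_submatrix {m n : ℕ} (X : Matrix (Fin m × Fin n) (Fin m × Fin n) ℂ) :
    ptraceB m n X = ∑ j, X.submatrix (·, j) (·, j) := by
  ext i i'
  simp [ptraceB, Matrix.sum_apply]

theorem Matrix.PosSemidef.ptraceB {m n : ℕ} {X : Matrix (Fin m × Fin n) (Fin m × Fin n) ℂ}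
    (hX : X.PosSemidef) : (ptraceB m n X).PosSemidef := by
  rw [ptraceB_eq_sum_submatrix]
  exact posSemidef_sum _ fun j _ => hX.submatrix _

theorem traceNorm_ptraceB_le_general
    (m n : ℕ)
    (ρ σ : Matrix (Fin m × Fin n) (Fin m × Fin n) ℂ)
    (hρ : ρ.PosSemidef)
    (hσ : σ.PosSemidef)
    (hAB : (ptraceB m n ρ - ptraceB m n σ).IsHermitian) :
    ∑ i, |hAB.eigenvalues i| ≤
      ∑ i, |(hρ.isHermitian.sub hσ.isHermitian).eigenvalues i| := by
  obtain ⟨P, N, hP, hN, hPN, htrace⟩ :=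
    (hρ.isHermitian.sub hσ.isHermitian).exists_posSemidef_sub_eq
  have hptrace : ptraceB m n ρ - ptraceB m n σ = ptraceB m n P - ptraceB m n N := by
    rw [← ptraceB_sub, ← ptraceB_sub, hPN]
  calc ∑ i, |hAB.eigenvalues i|
      ≤ RCLike.re (ptraceB m n P).trace + RCLike.re (ptraceB m n N).trace :=
        hAB.sum_abs_eigenvalues_le_of_eq_sub hP.ptraceB hN.ptraceB hptrace
    _ = _ := by rw [trace_ptraceB, trace_ptraceB, htrace]

/-- **Monotonicity of the trace norm under the partial trace.**
For density matrices `ρ`, `σ` on `ℂ^(m·n)`, the sum of the absolute values of the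
eigenvalues of the Hermitian matrix `Tr_B ρ - Tr_B σ = Tr_B (ρ - σ)` is at most the sum
of the absolute values of the eigenvalues of the Hermitian matrix `ρ - σ`, i.e.
`‖Tr_B ρ - Tr_B σ‖₁ ≤ ‖ρ - σ‖₁`. -/
theorem traceNorm_ptraceB_le
    (m n : ℕ)
    (ρ σ : Matrix (Fin m × Fin n) (Fin m × Fin n) ℂ)
    (hρ : ρ.PosSemidef) (htρ : ρ.trace = 1)
    (hσ : σ.PosSemidef) (htσ : σ.trace = 1)
    (hAB : (ptraceB m n ρ - ptraceB m n σ).IsHermitian) :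
    ∑ i, |hAB.eigenvalues i| ≤
      ∑ i, |(hρ.isHermitian.sub hσ.isHermitian).eigenvalues i| :=
  traceNorm_ptraceB_le_general m n ρ σ hρ hσ hAB
end

section
/- Let R(θ) = [[cos θ, sin θ], [−sin θ, cos θ]] and CZ = diag(1, 1, 1, −1). Then for all real θ₁, θ₂, the gate O(θ₁, θ₂) = CZ · (R(θ₁) ⊗ R(θ₂)) maps the singlet vector (0, 1, −1, 0)ᵀ to cos(θ₁ − θ₂)·(0, 1, −1, 0)ᵀ − sin(θ₁ − θ₂)·(1, 0, 0, −1)ᵀ. In particular, the singlet direction is preserved exactly when sin(θ₁ − θ₂) = 0. -/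
/-!
Factor `R(θ₁) ⊗ R(θ₂) = (R(θ₂) ⊗ R(θ₂)) (R(θ₁ - θ₂) ⊗ 1)`. The rotation `R(φ) ⊗ 1` sends the
singlet `|01⟩ - |10⟩` to `cos φ (|01⟩ - |10⟩) - sin φ (|00⟩ + |11⟩)`, and since `R(θ₂)` is a
rotation, `R(θ₂) ⊗ R(θ₂)` fixes both `|01⟩ - |10⟩` and `|00⟩ + |11⟩`. Finally `CZ` fixes the
singlet and flips the sign of `|11⟩`, turning `|00⟩ + |11⟩` into `|00⟩ - |11⟩`. As the singlet
vanishes at `|00⟩`, the result is a multiple of the singlet only when `sin (θ₁ - θ₂) = 0`.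
-/

open Real Matrix
open scoped Kronecker

/-- The single-qubit Pauli-`y` rotation `R(θ) = [[cos θ, sin θ], [-sin θ, cos θ]]`. -/
noncomputable def Rgate (θ : ℝ) : Matrix (Fin 2) (Fin 2) ℝ :=
  !![Real.cos θ, Real.sin θ; -Real.sin θ, Real.cos θ]

/-- The controlled-Z gate `CZ = diag (1, 1, 1, -1)` on the two-qubit computational basis
`|00⟩, |01⟩, |10⟩, |11⟩`. -/
def CZgate : Matrix (Fin 2 × Fin 2) (Fin 2 × Fin 2) ℝ :=
  Matrix.diagonal fun p => if p = (1, 1) then -1 else 1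

/-- The 2-qubit gate `O(θ₁, θ₂) = CZ · (R(θ₁) ⊗ R(θ₂))`. -/
noncomputable def Ogate (θ₁ θ₂ : ℝ) : Matrix (Fin 2 × Fin 2) (Fin 2 × Fin 2) ℝ :=
  CZgate * (Rgate θ₁ ⊗ₖ Rgate θ₂)

/-- The singlet vector `v = (0, 1, -1, 0)ᵀ`. -/
def singletVec : Fin 2 × Fin 2 → ℝ :=
  fun p => if p = (0, 1) then 1 else if p = (1, 0) then -1 else 0

/-- The vector `w = (1, 0, 0, -1)ᵀ`, i.e. `|00⟩ - |11⟩`. -/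
def wVec : Fin 2 × Fin 2 → ℝ :=
  fun p => if p = (0, 0) then 1 else if p = (1, 1) then -1 else 0

def phiPlusVec : Fin 2 × Fin 2 → ℝ :=
  fun p => if p = (0, 0) ∨ p = (1, 1) then 1 else 0

theorem kronecker_mulVec_singletVec (A B : Matrix (Fin 2) (Fin 2) ℝ) (p : Fin 2 × Fin 2) :
    ((A ⊗ₖ B) *ᵥ singletVec) p = A p.1 0 * B p.2 1 - A p.1 1 * B p.2 0 := by
  simp [mulVec, dotProduct, Fintype.sum_prod_type, Fin.sum_univ_two, singletVec, sub_eq_add_neg]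

theorem rgate_kronecker_mulVec_singletVec (θ₁ θ₂ : ℝ) :
    (Rgate θ₁ ⊗ₖ Rgate θ₂) *ᵥ singletVec =
      Real.cos (θ₁ - θ₂) • singletVec - Real.sin (θ₁ - θ₂) • phiPlusVec := by
  ext p
  rw [kronecker_mulVec_singletVec]
  fin_cases p <;> simp [Rgate, singletVec, phiPlusVec, Real.cos_sub, Real.sin_sub] <;> ring

theorem czgate_mulVec_singletVec : CZgate *ᵥ singletVec = singletVec := by
  ext p
  rw [CZgate, mulVec_diagonal]
  fin_cases p <;> simp [singletVec]

theorem czgate_mulVec_phiPlusVec : CZgate *ᵥ phiPlusVec = wVec := by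
  ext p
  rw [CZgate, mulVec_diagonal]
  fin_cases p <;> simp [phiPlusVec, wVec]

theorem exists_smul_singletVec_iff (a b : ℝ) :
    (∃ c : ℝ, a • singletVec - b • wVec = c • singletVec) ↔ b = 0 := by
  constructor
  · rintro ⟨c, hc⟩
    simpa [singletVec, wVec] using congrFun hc (0, 0)
  · rintro rfl
    exact ⟨a, by simp⟩

/-- **Action of the 2-qubit gate on the singlet vector.**
For all real `θ₁, θ₂`, the gate `O(θ₁, θ₂) = CZ · (R(θ₁) ⊗ R(θ₂))` maps the singlet vector
`(0, 1, -1, 0)ᵀ` to `cos (θ₁ - θ₂) • (0, 1, -1, 0)ᵀ - sin (θ₁ - θ₂) • (1, 0, 0, -1)ᵀ`.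
In particular, the singlet direction is preserved exactly when `sin (θ₁ - θ₂) = 0`. -/
theorem ogate_mulVec_singlet (θ₁ θ₂ : ℝ) :
    (Ogate θ₁ θ₂).mulVec singletVec =
        Real.cos (θ₁ - θ₂) • singletVec - Real.sin (θ₁ - θ₂) • wVec ∧
      ((∃ c : ℝ, (Ogate θ₁ θ₂).mulVec singletVec = c • singletVec) ↔
        Real.sin (θ₁ - θ₂) = 0) := by
  have h : (Ogate θ₁ θ₂).mulVec singletVec =
      Real.cos (θ₁ - θ₂) • singletVec - Real.sin (θ₁ - θ₂) • wVec := by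
    rw [Ogate, ← mulVec_mulVec, rgate_kronecker_mulVec_singletVec, mulVec_sub, mulVec_smul,
      mulVec_smul, czgate_mulVec_singletVec, czgate_mulVec_phiPlusVec]
  exact ⟨h, h ▸ exists_smul_singletVec_iff _ _⟩
end
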